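/- arXiv:2010.10372 — 2 statements merged into one kernel-verified Lean document; each statement's English description precedes it below -/
import Mathlib

section
/- Let G be a finite group, P a G-poset with an initial object x₀, and ρ : P⋊G → C a functor which is bijective on objects and surjective on each morphism set (identify the objects of C with those of P). Then C satisfies the Ore condition (hence carries the atomic topology), and for each object x of C, the set of all morphisms in C with domain x₀ and codomain x is a sieve on x which is contained in every nonempty sieve on x; it is the unique minimal nonempty sieve on x. -/
open CategoryTheory

/-! ## Basic site-theoretic notions -/

/-- The Ore condition: any cospan can be completed to a commutative square. -/
def OreCondition (C : Type*) [Category C] : Prop :=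
  ∀ ⦃x y z : C⦄ (f : y ⟶ x) (g : z ⟶ x),
    ∃ (w : C) (p : w ⟶ y) (q : w ⟶ z), p ≫ f = q ≫ g

/-- A Grothendieck topology is the atomic topology iff its covering sieves are
exactly the nonempty sieves. -/
def IsAtomicTopology {C : Type*} [Category C] (J : GrothendieckTopology C) : Prop :=
  ∀ (x : C) (S : Sieve x), S ∈ J x ↔ ∃ (y : C) (f : y ⟶ x), S f

/-- The presieve on `c` consisting of all morphisms with domain `c₀`. -/
def domPresieve {C : Type*} [Category C] (c₀ : C) (c : C) : Presieve c :=
  fun Y => {_f | Y = c₀}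

/-! ## Right `G`-sets and the orbit category -/

/-- The category of right `G`-sets, realized as presheaves of sets on the
one-object category of `G`. -/
abbrev GSet (G : Type) [Group G] := (SingleObj G)ᵒᵖ ⥤ Type

variable {G : Type} [Group G]

/-- The right coset space `H\G` as a right `G`-set (`G` acting by right
multiplication). -/
def cosetGSet (H : Subgroup G) : GSet G where
  obj _ := Quotient (QuotientGroup.rightRel H)
  map f := TypeCat.ofHom (Quotient.map' (fun x => x * f.unop)
    (fun a b hab => by
      rw [QuotientGroup.rightRel_apply] at hab ⊢
      simpa [mul_assoc] using hab))
  map_id _ := by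
    ext q
    induction q using Quotient.inductionOn' with
    | h a => exact congrArg (Quotient.mk _) (mul_one a)
  map_comp f g := by
    ext q
    induction q using Quotient.inductionOn' with
    | h a => exact congrArg (Quotient.mk _) (mul_assoc a f.unop g.unop).symm

/-- The orbit category `O(G)`: the full subcategory of right `G`-sets on the
coset spaces `H\G`, indexed by the subgroups of `G`. -/
abbrev OrbitCat (G : Type) [Group G] := InducedCategory (GSet G) (cosetGSet (G := G))

/-- For `a ∈ G`, the `G`-map `c_a : 1\G → 1\G`, `k ↦ a * k`. -/
def botAuto (a : G) : cosetGSet (⊥ : Subgroup G) ⟶ cosetGSet (⊥ : Subgroup G) where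
  app _ := TypeCat.ofHom (Quotient.map' (fun k => a * k)
    (fun x y hxy => by
      rw [QuotientGroup.rightRel_apply] at hxy ⊢
      simp only [Subgroup.mem_bot] at hxy ⊢
      rw [mul_inv_rev, ← mul_assoc, mul_assoc a, hxy]
      simp))
  naturality X Y f := by
    ext q
    induction q using Quotient.inductionOn' with
    | h k => exact congrArg (Quotient.mk _) (mul_assoc a k f.unop).symm

/-- The functor from the one-object category of `G` to the orbit category with
value `1\G`, sending `a` to `c_a`; it makes `F(1\G)` a right `G`-set for any
presheaf `F` on the orbit category. -/
def orbitBotIota (G : Type) [Group G] : SingleObj G ⥤ OrbitCat G where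
  obj _ := (⊥ : Subgroup G)
  map a := InducedCategory.homMk (botAuto a)
  map_id _ := by
    apply InducedCategory.hom_ext
    apply NatTrans.ext
    funext X
    ext q
    induction q using Quotient.inductionOn' with
    | h k => exact congrArg (Quotient.mk _) (one_mul k)
  map_comp {x y z} a b := by
    apply InducedCategory.hom_ext
    apply NatTrans.ext
    funext X
    ext q
    induction q using Quotient.inductionOn' with
    | h k => exact congrArg (Quotient.mk _) (mul_assoc b a k)

/-! ## The transporter category of a `G`-poset -/

/-- The transporter category `P ⋊ G` of a `G`-poset `P`: objects are those of
`P`, and morphisms `x ⟶ y` are elements `g ∈ G` with `g • x ≤ y`. -/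
@[ext] structure Transporter (G : Type) (P : Type) where pt : P

instance Transporter.category (G P : Type) [Group G] [PartialOrder P] [MulAction G P]
    [CovariantClass G P (· • ·) (· ≤ ·)] : Category (Transporter G P) where
  Hom x y := { g : G // g • x.pt ≤ y.pt }
  id x := ⟨1, by simp⟩
  comp {x y z} f g := ⟨g.1 * f.1, by
    rw [mul_smul]
    exact le_trans (CovariantClass.elim g.1 f.2) g.2⟩
  id_comp f := Subtype.ext (mul_one _)
  comp_id f := Subtype.ext (one_mul _)
  assoc f g h := Subtype.ext (mul_assoc h.1 g.1 f.1).symm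

variable {P : Type} [PartialOrder P] [MulAction G P]
    [CovariantClass G P (· • ·) (· ≤ ·)]

theorem smul_le_smul_act (g : G) {a b : P} (h : a ≤ b) : g • a ≤ g • b :=
  CovariantClass.elim g h

/-- An initial (i.e. bottom) element of a `G`-poset is fixed by `G`. -/
theorem smul_bot_eq {x₀ : P} (hbot : ∀ x : P, x₀ ≤ x) (g : G) : g • x₀ = x₀ :=
  le_antisymm (by simpa using smul_le_smul_act g (hbot (g⁻¹ • x₀))) (hbot _)

/-- The endomorphism `(g, id)` of the initial object `x₀` of `P ⋊ G`. -/
def gmor {x₀ : P} (hbot : ∀ x : P, x₀ ≤ x) (g : G) :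
    (⟨x₀⟩ : Transporter G P) ⟶ (⟨x₀⟩ : Transporter G P) :=
  ⟨g, le_of_eq (smul_bot_eq hbot g)⟩

theorem gmor_comp {x₀ : P} (hbot : ∀ x : P, x₀ ≤ x) (a b : G) :
    gmor (G := G) hbot b ≫ gmor hbot a = gmor hbot (a * b) := rfl

theorem gmor_one {x₀ : P} (hbot : ∀ x : P, x₀ ≤ x) :
    gmor (G := G) hbot (1 : G) = 𝟙 (⟨x₀⟩ : Transporter G P) := rfl

/-- The projection functor `π : P ⋊ G ⥤ G`. -/
def piFunctor (G P : Type) [Group G] [PartialOrder P] [MulAction G P]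
    [CovariantClass G P (· • ·) (· ≤ ·)] : Transporter G P ⥤ SingleObj G where
  obj _ := SingleObj.star G
  map f := f.1
  map_id _ := rfl
  map_comp _ _ := rfl

/-! ## Quotients of transporter categories and fixed-point presheaves -/

variable {C : Type} [SmallCategory C]

section
variable (ρ : Transporter G P ⥤ C) {x₀ : P} (hbot : ∀ x : P, x₀ ≤ x)

/-- `Hom_C(x₀, c)` as a right `G`-set, with `f · g := ρ(g, id) ≫ f`. -/
def homGSet (c : C) : GSet G where
  obj _ := (ρ.obj ⟨x₀⟩ ⟶ c)
  map f := TypeCat.ofHom fun φ => ρ.map (gmor hbot f.unop) ≫ φ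
  map_id _ := by
    ext φ
    show ρ.map (gmor hbot (1 : G)) ≫ φ = φ
    rw [gmor_one, ρ.map_id, Category.id_comp]
  map_comp {X Y Z} f g := by
    ext φ
    show ρ.map (gmor hbot (f.unop * g.unop)) ≫ φ =
      ρ.map (gmor hbot g.unop) ≫ ρ.map (gmor hbot f.unop) ≫ φ
    rw [← gmor_comp, ρ.map_comp, Category.assoc]

/-- Postcomposition `Hom_C(x₀, c) → Hom_C(x₀, c')` with `φ : c ⟶ c'`, as a map
of right `G`-sets. -/
def homGSetMap {c c' : C} (φ : c ⟶ c') : homGSet ρ hbot c ⟶ homGSet ρ hbot c' where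
  app _ := TypeCat.ofHom fun f => (show ρ.obj ⟨x₀⟩ ⟶ c from f) ≫ φ
  naturality X Y f := by
    ext ψ
    show (ρ.map (gmor hbot f.unop) ≫ (show ρ.obj ⟨x₀⟩ ⟶ c from ψ)) ≫ φ =
      ρ.map (gmor hbot f.unop) ≫ ((show ρ.obj ⟨x₀⟩ ⟶ c from ψ) ≫ φ)
    exact Category.assoc _ _ _

theorem homGSetMap_id (c : C) : homGSetMap ρ hbot (𝟙 c) = 𝟙 (homGSet ρ hbot c) := by
  apply NatTrans.ext
  funext X
  ext f
  exact Category.comp_id f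

theorem homGSetMap_comp {c c' c'' : C} (φ : c ⟶ c') (ψ : c' ⟶ c'') :
    homGSetMap ρ hbot (φ ≫ ψ) = homGSetMap ρ hbot φ ≫ homGSetMap ρ hbot ψ := by
  apply NatTrans.ext
  funext X
  ext f
  exact (Category.assoc _ _ _).symm

/-- The fixed-point presheaf `F_M : x ↦ Hom_{G-Set}(Hom_C(x₀, x), M)` on `C`. -/
def fixedPointPresheaf (M : GSet G) : Cᵒᵖ ⥤ Type where
  obj c := homGSet ρ hbot c.unop ⟶ M
  map {c c'} ψ := TypeCat.ofHom fun η => homGSetMap ρ hbot ψ.unop ≫ η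
  map_id c := by
    refine ConcreteCategory.hom_ext _ _ fun η => ?_
    show homGSetMap ρ hbot (𝟙 c.unop) ≫ η = η
    rw [homGSetMap_id, Category.id_comp]
  map_comp {c c' c''} ψ ψ' := by
    refine ConcreteCategory.hom_ext _ _ fun η => ?_
    show homGSetMap ρ hbot (ψ'.unop ≫ ψ.unop) ≫ η = _
    rw [homGSetMap_comp, Category.assoc]
    rfl

/-- The right `G`-set `𝔊(x₀)` attached to a presheaf `𝔊` on `C`: `g ∈ G`
acts as `𝔊(ρ(g, id))`. -/
def evalGSet (𝔊 : Cᵒᵖ ⥤ Type) : GSet G where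
  obj _ := 𝔊.obj (Opposite.op (ρ.obj ⟨x₀⟩))
  map f := 𝔊.map (ρ.map (gmor hbot f.unop)).op
  map_id _ := by
    show 𝔊.map (ρ.map (gmor hbot (1 : G))).op = _
    rw [gmor_one, ρ.map_id]
    exact 𝔊.map_id _
  map_comp {X Y Z} f g := by
    show 𝔊.map (ρ.map (gmor hbot (f.unop * g.unop))).op = _
    rw [← gmor_comp, ρ.map_comp, op_comp, 𝔊.map_comp]

end

/-- `ρ : P⋊G ⥤ C` is a category extension: it is bijective on objects,
surjective on morphism sets, the kernel groups `K(y)` act freely by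
postcomposition on hom sets, and `ρ` exactly identifies the `K(y)`-orbits of
morphisms, i.e. `K(y)\Hom(x, y) ≅ Hom_C(ρx, ρy)`. -/
structure IsCatExtension (ρ : Transporter G P ⥤ C) : Prop where
  bij_obj : Function.Bijective ρ.obj
  surj_map : ∀ {x y : Transporter G P} (f : ρ.obj x ⟶ ρ.obj y), ∃ u : x ⟶ y, ρ.map u = f
  free : ∀ {y : Transporter G P} (α : y ⟶ y), ρ.map α = 𝟙 (ρ.obj y) →
    ∀ {x : Transporter G P} (u : x ⟶ y), u ≫ α = u → α = 𝟙 y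
  fiber : ∀ {x y : Transporter G P} (u u' : x ⟶ y),
    ρ.map u = ρ.map u' ↔ ∃ α : y ⟶ y, ρ.map α = 𝟙 (ρ.obj y) ∧ u ≫ α = u'

/-! ## The transporter category `T(G)` on subgroups -/

/-- The transporter category `T(G)`: objects are the subgroups of `G`,
morphisms `H ⟶ K` are elements `g ∈ G` with `gHg⁻¹ ≤ K`. -/
@[ext] structure TransporterCat (G : Type) [Group G] where sub : Subgroup G

instance TransporterCat.category (G : Type) [Group G] : Category (TransporterCat G) where
  Hom H K := { g : G // ∀ h ∈ H.sub, g * h * g⁻¹ ∈ K.sub }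
  id H := ⟨1, fun h hh => by simpa using hh⟩
  comp {H K L} f g := ⟨g.1 * f.1, fun h hh => by
    have hmem := g.2 _ (f.2 h hh)
    have heq : g.1 * (f.1 * h * f.1⁻¹) * g.1⁻¹ = (g.1 * f.1) * h * (g.1 * f.1)⁻¹ := by group
    rwa [heq] at hmem⟩
  id_comp f := Subtype.ext (mul_one _)
  comp_id f := Subtype.ext (one_mul _)
  assoc f g h := Subtype.ext (mul_assoc h.1 g.1 f.1).symm

/-- The conjugate subgroup `gHg⁻¹`. -/
def conjSubgroup (g : G) (H : Subgroup G) : Subgroup G :=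
  H.map (MulAut.conj g).toMonoidHom

lemma conjSubgroup_inv_mem {g : G} {H : Subgroup G} {w : G}
    (hw : w ∈ conjSubgroup g H) : g⁻¹ * w * g⁻¹⁻¹ ∈ H := by
  obtain ⟨h, hh, rfl⟩ := hw
  have : g⁻¹ * ((MulAut.conj g).toMonoidHom h) * g⁻¹⁻¹ = h := by
    simp [MulAut.conj_apply]; group
  rwa [this]

/-- The `G`-map `H\G → K\G`, `Hk ↦ Kgk`, attached to `g ∈ G` with `gHg⁻¹ ≤ K`. -/
def transToOrbit {H K : Subgroup G} (g : { g : G // ∀ h ∈ H, g * h * g⁻¹ ∈ K }) :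
    cosetGSet H ⟶ cosetGSet K where
  app _ := TypeCat.ofHom (Quotient.map' (fun k => g.1 * k)
    (fun a b hab => by
      rw [QuotientGroup.rightRel_apply] at hab ⊢
      have := g.2 _ hab
      have heq : g.1 * (b * a⁻¹) * g.1⁻¹ = (g.1 * b) * (g.1 * a)⁻¹ := by group
      rwa [heq] at this))
  naturality X Y f := by
    ext q
    induction q using Quotient.inductionOn' with
    | h k => exact congrArg (Quotient.mk _) (mul_assoc g.1 k f.unop).symm

/-- The setoid on `{g : G // gHg⁻¹ ≤ K}` whose classes are right cosets `Kg`. -/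
def transSetoid (H K : Subgroup G) : Setoid { g : G // ∀ h ∈ H, g * h * g⁻¹ ∈ K } where
  r a b := a.1 * b.1⁻¹ ∈ K
  iseqv := by
    constructor
    · intro a; simpa using K.one_mem
    · intro a b h
      simpa using K.inv_mem h
    · intro a b c h1 h2
      have := K.mul_mem h1 h2
      simpa [mul_assoc] using this

/-! ## The coset space `H\G` as a discrete `G`-poset -/

/-- The coset space `H\G` as a discretely ordered `G`-poset, with `g` acting
by `Hk ↦ Hkg⁻¹`. -/
def CosetPoset (G : Type) [Group G] (H : Subgroup G) :=
  Quotient (QuotientGroup.rightRel H)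

instance (H : Subgroup G) : PartialOrder (CosetPoset G H) where
  le x y := x = y
  le_refl _ := rfl
  le_trans _ _ _ h h' := Eq.trans h h'
  le_antisymm _ _ h _ := h

instance (H : Subgroup G) : MulAction G (CosetPoset G H) where
  smul g := Quotient.map' (fun k => k * g⁻¹)
    (fun a b hab => by
      rw [QuotientGroup.rightRel_apply] at hab ⊢
      simpa [mul_assoc] using hab)
  one_smul q := by
    induction q using Quotient.inductionOn' with
    | h k => exact congrArg (Quotient.mk _) (by simp)
  mul_smul a b q := by
    induction q using Quotient.inductionOn' with
    | h k => exact congrArg (Quotient.mk _) (by simp [mul_assoc])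

instance (H : Subgroup G) : CovariantClass G (CosetPoset G H) (· • ·) (· ≤ ·) where
  elim g x y h := le_of_eq (congrArg (g • ·) (le_antisymm h (Eq.symm h : y ≤ x)))

/-! ## Underlying `G`-set of a right `RG`-module -/

/-- The underlying right `G`-set of a right `RG`-module. -/
noncomputable def UGSet (R : Type) [CommRing R]
    (M : ModuleCat (MonoidAlgebra R G)ᵐᵒᵖ) : GSet G where
  obj _ := M
  map f := TypeCat.ofHom fun m => (MulOpposite.op (MonoidAlgebra.single f.unop (1 : R))) • m
  map_id _ := by
    ext m
    show (MulOpposite.op (MonoidAlgebra.single (1 : G) (1 : R))) • m = m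
    rw [← MonoidAlgebra.one_def, MulOpposite.op_one, one_smul]
  map_comp {X Y Z} f g := by
    ext m
    show (MulOpposite.op (MonoidAlgebra.single (f.unop * g.unop) (1 : R))) • m =
      (MulOpposite.op (MonoidAlgebra.single g.unop (1 : R))) •
        ((MulOpposite.op (MonoidAlgebra.single f.unop (1 : R))) • m)
    rw [smul_smul, ← MulOpposite.op_mul, MonoidAlgebra.single_mul_single, one_mul]

/-!
The initial object `x₀` is fixed by `G`, so a morphism `x₀ ⟶ z` of `P ⋊ G` is just an element
`u ∈ G`, and it factors through any `f : y ⟶ z` as `(f⁻¹u, id) ≫ f`. Moreover only `x₀` maps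
to `x₀`. Both facts survive the functor `ρ`, which is full and surjective on objects, and they
are all the sieve calculus needs: every morphism from `x₀` lies in every nonempty sieve, which also gives
the Ore condition, since a cospan factors any morphism from `x₀` into its common target.
-/

open CategoryTheory

namespace CategoryTheory

variable {E : Type*} [Category E]

def HomsFactorThroughAll (c₀ : E) : Prop :=
  ∀ ⦃y c : E⦄ (f : y ⟶ c) (ψ : c₀ ⟶ c), ∃ p : c₀ ⟶ y, p ≫ f = ψ

theorem OreCondition.rightOreCondition (h : OreCondition E) :
    GrothendieckTopology.RightOreCondition E :=
  fun f g => h f g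

section HomsFactorThroughAll

variable {c₀ : E} (hdom : ∀ ⦃z : E⦄, (z ⟶ c₀) → z = c₀)

def domSieve (c : E) : Sieve c where
  arrows := domPresieve c₀ c
  downward_closed := by
    rintro y z f (rfl : y = c₀) g
    exact hdom g

variable (hfac : HomsFactorThroughAll c₀) (hne : ∀ c : E, Nonempty (c₀ ⟶ c))

include hfac hne in
theorem oreCondition_of_homsFactorThroughAll : OreCondition E := by
  intro x y z f g
  obtain ⟨ψ⟩ := hne x
  obtain ⟨p, hp⟩ := hfac f ψ
  obtain ⟨q, hq⟩ := hfac g ψ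
  exact ⟨c₀, p, q, hp.trans hq.symm⟩

include hfac in
theorem domPresieve_le_of_nonempty {c : E} (S : Sieve c) (hS : ∃ (y : E) (f : y ⟶ c), S f) :
    domPresieve c₀ c ≤ S.arrows := by
  rintro y f (rfl : y = c₀)
  obtain ⟨z, g, hg⟩ := hS
  obtain ⟨p, hp⟩ := hfac g f
  simpa only [hp] using S.downward_closed hg p

include hne in
theorem domPresieve_nonempty (c : E) : ∃ (y : E) (f : y ⟶ c), domPresieve c₀ c f :=
  ⟨c₀, Classical.choice (hne c), rfl⟩

include hfac hne hdom in
theorem isMinimalNonempty_iff_arrows_eq_domPresieve {c : E} (S : Sieve c) :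
    ((∃ (y : E) (f : y ⟶ c), S f) ∧ ∀ T : Sieve c, (∃ (y : E) (f : y ⟶ c), T f) → S ≤ T) ↔
      S.arrows = domPresieve c₀ c := by
  constructor
  · rintro ⟨hS, hmin⟩
    exact le_antisymm (hmin (domSieve hdom c) (domPresieve_nonempty hne c))
      (domPresieve_le_of_nonempty hfac S hS)
  · intro hS
    obtain rfl : S = domSieve hdom c := Sieve.arrows_ext (S := domSieve hdom c) hS
    exact ⟨domPresieve_nonempty hne c, fun T hT => domPresieve_le_of_nonempty hfac T hT⟩

end HomsFactorThroughAll

section Transfer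

variable {D : Type*} [Category D] (ρ : D ⥤ E) (hobj : Function.Surjective ρ.obj)
include hobj

theorem nonempty_hom_map_obj {d₀ : D} (h : ∀ d : D, Nonempty (d₀ ⟶ d)) (c : E) :
    Nonempty (ρ.obj d₀ ⟶ c) := by
  obtain ⟨d, rfl⟩ := hobj c
  exact (h d).map ρ.map

variable (hfull : ∀ {x y : D} (f : ρ.obj x ⟶ ρ.obj y), ∃ u : x ⟶ y, ρ.map u = f)
include hfull

theorem HomsFactorThroughAll.map {d₀ : D} (h : HomsFactorThroughAll d₀) :
    HomsFactorThroughAll (ρ.obj d₀) := by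
  intro y c f ψ
  obtain ⟨y, rfl⟩ := hobj y
  obtain ⟨c, rfl⟩ := hobj c
  obtain ⟨f, rfl⟩ := hfull f
  obtain ⟨ψ, rfl⟩ := hfull ψ
  obtain ⟨p, hp⟩ := h f ψ
  exact ⟨ρ.map p, by rw [← ρ.map_comp, hp]⟩

theorem eq_map_obj_of_hom {d₀ : D} (h : ∀ ⦃z : D⦄, (z ⟶ d₀) → z = d₀)
    ⦃z : E⦄ (g : z ⟶ ρ.obj d₀) : z = ρ.obj d₀ := by
  obtain ⟨z, rfl⟩ := hobj z
  obtain ⟨u, -⟩ := hfull g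
  rw [h u]

end Transfer

end CategoryTheory

namespace Transporter

variable {x₀ : P} (hbot : ∀ x : P, x₀ ≤ x)
include hbot

theorem homsFactorThroughAll_of_bot : HomsFactorThroughAll (⟨x₀⟩ : Transporter G P) := by
  intro y z f u
  refine ⟨⟨f.1⁻¹ * u.1, ?_⟩, Subtype.ext (mul_inv_cancel_left f.1 u.1)⟩
  rw [smul_bot_eq hbot]
  exact hbot _

theorem nonempty_hom_of_bot (x : Transporter G P) : Nonempty ((⟨x₀⟩ : Transporter G P) ⟶ x) :=
  ⟨⟨1, by simpa using hbot x.pt⟩⟩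

theorem eq_bot_of_hom ⦃z : Transporter G P⦄ (u : z ⟶ ⟨x₀⟩) : z = ⟨x₀⟩ := by
  have hu : u.1 • z.pt = x₀ := le_antisymm u.2 (hbot _)
  ext
  rw [← inv_smul_smul u.1 z.pt, hu, smul_bot_eq hbot]

end Transporter

theorem quotient_of_transporter_minimal_sieve_general (G : Type) [Group G] (P : Type) [PartialOrder P]
    [MulAction G P] [CovariantClass G P (· • ·) (· ≤ ·)]
    (x₀ : P) (hbot : ∀ x : P, x₀ ≤ x)
    (C : Type) [SmallCategory C] (ρ : Transporter G P ⥤ C)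
    (hobj : Function.Bijective ρ.obj)
    (hsurj : ∀ {x y : Transporter G P} (f : ρ.obj x ⟶ ρ.obj y),
      ∃ u : x ⟶ y, ρ.map u = f) :
    OreCondition C ∧ (∃ J : GrothendieckTopology C, IsAtomicTopology J) ∧
    ∀ c : C,
      (∃ S : Sieve c, S.arrows = domPresieve (ρ.obj ⟨x₀⟩) c) ∧
      (∀ S : Sieve c, (∃ (y : C) (f : y ⟶ c), S f) →
        ∀ ⦃y : C⦄ (f : y ⟶ c), domPresieve (ρ.obj ⟨x₀⟩) c f → S f) ∧
      (∀ S : Sieve c,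
        ((∃ (y : C) (f : y ⟶ c), S f) ∧
          ∀ T : Sieve c, (∃ (y : C) (f : y ⟶ c), T f) → S ≤ T) ↔
        S.arrows = domPresieve (ρ.obj ⟨x₀⟩) c) := by
  have hfac : HomsFactorThroughAll (ρ.obj ⟨x₀⟩) :=
    (Transporter.homsFactorThroughAll_of_bot hbot).map ρ hobj.2 hsurj
  have hne := nonempty_hom_map_obj ρ hobj.2 (Transporter.nonempty_hom_of_bot hbot)
  have hdom := eq_map_obj_of_hom ρ hobj.2 hsurj (Transporter.eq_bot_of_hom hbot)
  have hore := oreCondition_of_homsFactorThroughAll hfac hne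
  refine ⟨hore, ⟨.atomic hore.rightOreCondition, fun _ _ => Iff.rfl⟩, fun c => ?_⟩
  exact ⟨⟨domSieve hdom c, rfl⟩, fun S hS => domPresieve_le_of_nonempty hfac S hS,
    isMinimalNonempty_iff_arrows_eq_domPresieve hdom hfac hne⟩

/-- If `ρ : P⋊G ⥤ C` is bijective on objects and surjective on morphism sets,
then `C` satisfies the Ore condition (hence carries the atomic topology), and for
each object `c` the set of morphisms with domain `x₀` is a sieve contained in
every nonempty sieve on `c`; it is the unique minimal nonempty sieve. -/
theorem quotient_of_transporter_minimal_sieve (G : Type) [Group G] [Finite G] (P : Type) [PartialOrder P]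
    [MulAction G P] [CovariantClass G P (· • ·) (· ≤ ·)]
    (x₀ : P) (hbot : ∀ x : P, x₀ ≤ x)
    (C : Type) [SmallCategory C] (ρ : Transporter G P ⥤ C)
    (hobj : Function.Bijective ρ.obj)
    (hsurj : ∀ {x y : Transporter G P} (f : ρ.obj x ⟶ ρ.obj y),
      ∃ u : x ⟶ y, ρ.map u = f) :
    OreCondition C ∧ (∃ J : GrothendieckTopology C, IsAtomicTopology J) ∧
    ∀ c : C,
      (∃ S : Sieve c, S.arrows = domPresieve (ρ.obj ⟨x₀⟩) c) ∧
      (∀ S : Sieve c, (∃ (y : C) (f : y ⟶ c), S f) →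
        ∀ ⦃y : C⦄ (f : y ⟶ c), domPresieve (ρ.obj ⟨x₀⟩) c f → S f) ∧
      (∀ S : Sieve c,
        ((∃ (y : C) (f : y ⟶ c), S f) ∧
          ∀ T : Sieve c, (∃ (y : C) (f : y ⟶ c), T f) → S ≤ T) ↔
        S.arrows = domPresieve (ρ.obj ⟨x₀⟩) c) :=
  quotient_of_transporter_minimal_sieve_general G P x₀ hbot C ρ hobj hsurj
end

section
/- Let G be a finite group and p a prime. Let T_p(G) be the full subcategory of the transporter category T(G) whose objects are all p-subgroups of G (including the trivial subgroup), and let O_p(G) be the full subcategory of G-Set whose objects are the coset spaces P\G for all p-subgroups P ≤ G. Then the category of sheaves of sets on (T_p(G), J_at) and the category of sheaves of sets on (O_p(G), J_at) are each equivalent to G-Set. -/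
open CategoryTheory

variable {G : Type} [Group G]

variable {P : Type} [PartialOrder P] [MulAction G P]
    [CovariantClass G P (· • ·) (· ≤ ·)]

/-! ## Quotients of transporter categories and fixed-point presheaves -/

variable {C : Type} [SmallCategory C]

/-!
The trivial subgroup is initial among the `p`-subgroups, and its endomorphisms in `T_p(G)`,
resp. `O_p(G)`, form exactly the group `G` (an endomorphism of `1\G` is determined by the image of
the trivial coset). So `G`, viewed as a one-object groupoid, embeds fully faithfully into both
categories, and every object receives a map from its image. For the atomic topology this makes
`G` a dense subsite carrying the trivial topology, since in a groupoid every nonempty sieve is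
maximal. The comparison lemma identifies atomic sheaves with presheaves on `G`, i.e. right
`G`-sets.
-/

namespace CategoryTheory

theorem Sieve.eq_top_of_isIso_mem {C : Type*} [Category C] {X Y : C} {S : Sieve X}
    {f : Y ⟶ X} [IsIso f] (hf : S f) : S = ⊤ := by
  rw [← Sieve.id_mem_iff_eq_top, ← IsIso.inv_hom_id f]
  exact S.downward_closed hf _

theorem Functor.isDenseSubsite_bot_of_isAtomicTopology {C D : Type*} [Groupoid C] [Category D]
    (i : C ⥤ D) [i.Full] [i.Faithful] {K : GrothendieckTopology D} (hK : IsAtomicTopology K)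
    (hcover : ∀ U : D, ∃ X : C, Nonempty (i.obj X ⟶ U)) :
    i.IsDenseSubsite ⊥ K := by
  have : i.IsCoverDense K := ⟨fun U => by
    obtain ⟨X, ⟨f⟩⟩ := hcover U
    exact (hK U _).mpr ⟨_, f, Presieve.in_coverByImage i f⟩⟩
  refine ⟨inferInstance, inferInstance, inferInstance, fun {X S} => ?_⟩
  rw [GrothendieckTopology.bot_covering, hK]
  constructor
  · rintro ⟨_, _, _, g, _, hg, _⟩
    exact Sieve.eq_top_of_isIso_mem hg
  · rintro rfl
    exact ⟨_, 𝟙 _, X, 𝟙 _, 𝟙 _, trivial, by simp⟩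

noncomputable def sheafEquivPresheafOfIsAtomicTopology {C D : Type} [Groupoid.{0} C]
    [SmallCategory D] (i : C ⥤ D) [i.Full] [i.Faithful] {K : GrothendieckTopology D}
    (hK : IsAtomicTopology K) (hcover : ∀ U : D, ∃ X : C, Nonempty (i.obj X ⟶ U))
    (A : Type*) [Category A] [Limits.HasLimits A] :
    Sheaf K A ≌ Cᵒᵖ ⥤ A :=
  have := i.isDenseSubsite_bot_of_isAtomicTopology hK hcover
  (Functor.IsDenseSubsite.sheafEquiv ⊥ K i A).symm.trans (sheafBotEquivalence A)

end CategoryTheory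

theorem Subgroup.mul_mul_inv_mem_of_mem_bot (K : Subgroup G) (g : G) :
    ∀ h ∈ (⊥ : Subgroup G), g * h * g⁻¹ ∈ K := by
  intro h hh
  rw [Subgroup.mem_bot.mp hh, mul_one, mul_inv_cancel]
  exact K.one_mem

def TransporterCat.fromBot (K : TransporterCat G) (g : G) : (⟨⊥⟩ : TransporterCat G) ⟶ K :=
  ⟨g, K.sub.mul_mul_inv_mem_of_mem_bot g⟩

def singleObjToTransporter (F : ObjectProperty (TransporterCat G)) (hF : F ⟨⊥⟩) :
    SingleObj G ⥤ F.FullSubcategory where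
  obj _ := ⟨⟨⊥⟩, hF⟩
  map g := ObjectProperty.homMk (TransporterCat.fromBot ⟨⊥⟩ g)

instance (F : ObjectProperty (TransporterCat G)) (hF : F ⟨⊥⟩) :
    (singleObjToTransporter F hF).Full :=
  ⟨fun f => ⟨f.hom.1, rfl⟩⟩

instance (F : ObjectProperty (TransporterCat G)) (hF : F ⟨⊥⟩) :
    (singleObjToTransporter F hF).Faithful :=
  ⟨fun h => congrArg (fun f => f.hom.1) h⟩

section BotAuto

local notation "⟦" x "⟧₁" => (Quotient.mk (QuotientGroup.rightRel (⊥ : Subgroup G)) x)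

theorem botAuto_one : botAuto (1 : G) = 𝟙 _ :=
  congrArg InducedCategory.Hom.hom ((orbitBotIota G).map_id (SingleObj.star G))

theorem botAuto_mul (a b : G) : botAuto (a * b) = botAuto b ≫ botAuto a :=
  congrArg InducedCategory.Hom.hom ((orbitBotIota G).map_comp (X := SingleObj.star G)
    (Y := SingleObj.star G) (Z := SingleObj.star G) b a)

theorem botAuto_app_mk (a k : G) :
    (botAuto a).app (Opposite.op (SingleObj.star G)) ⟦k⟧₁ = ⟦a * k⟧₁ := rfl

theorem cosetGSet_map_mk (H : Subgroup G) (k x : G) :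
    (cosetGSet H).map (Quiver.Hom.op (X := SingleObj.star G) (Y := SingleObj.star G) k)
      (Quotient.mk (QuotientGroup.rightRel H) x) = Quotient.mk (QuotientGroup.rightRel H) (x * k) :=
  rfl

theorem botAuto_injective : Function.Injective (botAuto (G := G)) := by
  intro a b h
  have hab := congrArg (fun φ => φ.app (Opposite.op (SingleObj.star G)) ⟦1⟧₁) h
  simp only [botAuto_app_mk, mul_one] at hab
  have hab := Quotient.exact' hab
  rwa [QuotientGroup.rightRel_apply, Subgroup.mem_bot, mul_inv_eq_one, eq_comm] at hab

theorem exists_botAuto_eq (φ : cosetGSet (⊥ : Subgroup G) ⟶ cosetGSet ⊥) :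
    ∃ a, botAuto a = φ := by
  obtain ⟨a, ha⟩ := Quotient.exists_rep (φ.app (Opposite.op (SingleObj.star G)) ⟦1⟧₁)
  refine ⟨a, NatTrans.ext (funext fun X => ?_)⟩
  obtain ⟨⟨⟩⟩ := X
  ext q
  induction q using Quotient.inductionOn' with
  | h k =>
    have hk := NatTrans.naturality_apply φ
      (Quiver.Hom.op (X := SingleObj.star G) (Y := SingleObj.star G) k) ⟦1⟧₁
    simp only [cosetGSet_map_mk, one_mul, ← ha] at hk
    exact hk.symm

end BotAuto

def singleObjToOrbit (F : Subgroup G → Prop) (hF : F ⊥) :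
    SingleObj G ⥤ InducedCategory (GSet G) (fun H : Subtype F => cosetGSet H.1) where
  obj _ := ⟨⊥, hF⟩
  map a := InducedCategory.homMk (botAuto a)
  map_id _ := InducedCategory.hom_ext botAuto_one
  map_comp a b := InducedCategory.hom_ext (botAuto_mul b a)

instance (F : Subgroup G → Prop) (hF : F ⊥) : (singleObjToOrbit F hF).Full :=
  ⟨fun φ => (exists_botAuto_eq φ.hom).imp fun _ ha => InducedCategory.hom_ext ha⟩

instance (F : Subgroup G → Prop) (hF : F ⊥) : (singleObjToOrbit F hF).Faithful :=
  ⟨fun h => botAuto_injective (congrArg InducedCategory.Hom.hom h :)⟩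

noncomputable def transporterSheafEquivGSet (F : ObjectProperty (TransporterCat G)) (hF : F ⟨⊥⟩)
    {K : GrothendieckTopology F.FullSubcategory} (hK : IsAtomicTopology K) :
    Sheaf K Type ≌ GSet G :=
  sheafEquivPresheafOfIsAtomicTopology (singleObjToTransporter F hF) hK
    (fun U => ⟨SingleObj.star G, ⟨ObjectProperty.homMk (U.obj.fromBot 1)⟩⟩) Type

noncomputable def orbitSheafEquivGSet (F : Subgroup G → Prop) (hF : F ⊥)
    {K : GrothendieckTopology (InducedCategory (GSet G) (fun H : Subtype F => cosetGSet H.1))}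
    (hK : IsAtomicTopology K) :
    Sheaf K Type ≌ GSet G :=
  sheafEquivPresheafOfIsAtomicTopology (singleObjToOrbit F hF) hK
    (fun U => ⟨SingleObj.star G, ⟨InducedCategory.homMk
      (transToOrbit ⟨1, U.1.mul_mul_inv_mem_of_mem_bot 1⟩)⟩⟩) Type

theorem sheaves_on_p_local_categories_general (G : Type) [Group G]
    (p : ℕ)
    (J1 : GrothendieckTopology
      (ObjectProperty.FullSubcategory (fun H : TransporterCat G => IsPGroup p H.sub)))
    (hJ1 : IsAtomicTopology J1)
    (J2 : GrothendieckTopology (InducedCategory (GSet G)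
      (fun Q : {H : Subgroup G // IsPGroup p H} => cosetGSet Q.1)))
    (hJ2 : IsAtomicTopology J2) :
    Nonempty (Sheaf J1 Type ≌ GSet G) ∧ Nonempty (Sheaf J2 Type ≌ GSet G) :=
  ⟨⟨transporterSheafEquivGSet _ IsPGroup.of_bot hJ1⟩, ⟨orbitSheafEquivGSet _ IsPGroup.of_bot hJ2⟩⟩

/-- Sheaves of sets on the `p`-transporter category `T_p(G)` and on the `p`-orbit
category `O_p(G)`, each with its atomic topology, are both equivalent to the
category of right `G`-sets. -/
theorem sheaves_on_p_local_categories (G : Type) [Group G] [Finite G]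
    (p : ℕ) (hp : p.Prime)
    (J1 : GrothendieckTopology
      (ObjectProperty.FullSubcategory (fun H : TransporterCat G => IsPGroup p H.sub)))
    (hJ1 : IsAtomicTopology J1)
    (J2 : GrothendieckTopology (InducedCategory (GSet G)
      (fun Q : {H : Subgroup G // IsPGroup p H} => cosetGSet Q.1)))
    (hJ2 : IsAtomicTopology J2) :
    Nonempty (Sheaf J1 Type ≌ GSet G) ∧ Nonempty (Sheaf J2 Type ≌ GSet G) :=
  sheaves_on_p_local_categories_general G p J1 hJ1 J2 hJ2
end
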